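/- arXiv:2108.00632 — 8 statements merged into one kernel-verified Lean document; each statement's English description precedes it below -/
import Mathlib

section
/- Let S be a finite crossing-free set of pairs of natural numbers, let x be a natural number, and suppose the candidate set B = {b | there exists a with (a,b) ∈ S and a ≤ x} is nonempty. Let y be the maximum of B. Then S ∪ {(x,y)} is crossing-free. -/
/-- A set `S` of pairs of natural numbers is crossing-free if there do not
exist pairs `(a,b) ∈ S` and `(c,d) ∈ S` with `a < c` and `d < b`. -/
def CrossingFree (S : Set (ℕ × ℕ)) : Prop :=
  ¬ ∃ a b c d, (a, b) ∈ S ∧ (c, d) ∈ S ∧ a < c ∧ d < b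

/-- Snapshot selection (Algorithm 1), candidate case: if the candidate set
`B = {b | ∃ a, (a,b) ∈ S ∧ a ≤ x}` is nonempty and `y` is its maximum, then
inserting `(x, y)` keeps `S` crossing-free. -/
theorem snapshot_selection_candidates (S : Set (ℕ × ℕ)) (hfin : S.Finite)
    (hcf : CrossingFree S) (x : ℕ)
    (hne : {b | ∃ a, (a, b) ∈ S ∧ a ≤ x}.Nonempty) :
    CrossingFree (S ∪ {(x, sSup {b | ∃ a, (a, b) ∈ S ∧ a ≤ x})}) := by
  set B := {b | ∃ a, (a, b) ∈ S ∧ a ≤ x} with hB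
  have hBfin : B.Finite := by
    apply (hfin.image Prod.snd).subset
    rintro b ⟨a, hab, -⟩
    exact ⟨(a, b), hab, rfl⟩
  have hmem : sSup B ∈ B := Set.Nonempty.csSup_mem hne hBfin
  rintro ⟨a, b, c, d, hab, hcd, hac, hdb⟩
  rcases hab with hab | hab
  · rcases hcd with hcd | hcd
    · exact hcf ⟨a, b, c, d, hab, hcd, hac, hdb⟩
    · -- (c,d) = (x, sSup B)
      simp only [Set.mem_singleton_iff, Prod.mk.injEq] at hcd
      obtain ⟨hc, hd⟩ := hcd
      have : b ∈ B := ⟨a, hab, le_of_lt (hc ▸ hac)⟩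
      have : b ≤ sSup B := le_csSup hBfin.bddAbove this
      omega
  · simp only [Set.mem_singleton_iff, Prod.mk.injEq] at hab
    obtain ⟨ha, hb⟩ := hab
    rcases hcd with hcd | hcd
    · obtain ⟨a0, ha0, ha0x⟩ := hmem
      exact hcf ⟨a0, sSup B, c, d, ha0, hcd, by omega, by omega⟩
    · simp only [Set.mem_singleton_iff, Prod.mk.injEq] at hcd
      omega
end

section
/- Let S be a finite crossing-free set of pairs of natural numbers and let x be a natural number such that some (a,b) ∈ S has a < x. Let a* be the largest first coordinate of an element of S that is strictly less than x. Then max {b | (a*,b) ∈ S} = max {b | there exists a with (a,b) ∈ S and a < x}. -/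
/-- Reverse scan of Algorithm 2: if `astar` is the largest first coordinate of
an element of `S` that is strictly less than `x`, then the maximum value
mapped at `astar` equals the maximum value mapped at any key below `x`. -/
theorem reverse_scan_nearest_key (S : Set (ℕ × ℕ)) (hfin : S.Finite)
    (hcf : CrossingFree S) (x astar : ℕ)
    (h1 : ∃ b, (astar, b) ∈ S) (h2 : astar < x)
    (h3 : ∀ p ∈ S, p.1 < x → p.1 ≤ astar) :
    sSup {b | (astar, b) ∈ S} = sSup {b | ∃ a, (a, b) ∈ S ∧ a < x} := by
  have hsub1 : {b | (astar, b) ∈ S} ⊆ Prod.snd '' S := fun b hb => ⟨(astar, b), hb, rfl⟩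
  have hsub2 : {b | ∃ a, (a, b) ∈ S ∧ a < x} ⊆ Prod.snd '' S := by
    rintro b ⟨a, ha, -⟩; exact ⟨(a, b), ha, rfl⟩
  have hbdd : BddAbove (Prod.snd '' S) := (hfin.image _).bddAbove
  have hb1 : BddAbove {b | (astar, b) ∈ S} := hbdd.mono hsub1
  have hb2 : BddAbove {b | ∃ a, (a, b) ∈ S ∧ a < x} := hbdd.mono hsub2
  apply le_antisymm
  · exact csSup_le_csSup hb2 h1 (fun b hb => ⟨astar, hb, h2⟩)
  · obtain ⟨b0, hb0⟩ := h1
    refine csSup_le ⟨b0, astar, hb0, h2⟩ ?_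
    rintro b ⟨a, ha, hax⟩
    have hale : a ≤ astar := h3 (a, b) ha hax
    rcases lt_or_eq_of_le hale with h | h
    · have : b ≤ b0 := by
        by_contra hgt
        exact hcf ⟨a, b, astar, b0, ha, hb0, h, lt_of_not_ge hgt⟩
      exact this.trans (le_csSup hb1 hb0)
    · subst h; exact le_csSup hb1 ha
end

section
/- Let S be a finite crossing-free set of pairs of natural numbers and let x be a natural number such that some (c,d) ∈ S has x < c. Let c* be the smallest first coordinate of an element of S that is strictly greater than x. Then min {d | (c*,d) ∈ S} = min {d | there exists c with (c,d) ∈ S and x < c}. -/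
/-- Forward scan of Algorithm 2: if `cstar` is the smallest first coordinate
of an element of `S` that is strictly greater than `x`, then the minimum value
mapped at `cstar` equals the minimum value mapped at any key above `x`. -/
theorem forward_scan_nearest_key (S : Set (ℕ × ℕ)) (hfin : S.Finite)
    (hcf : CrossingFree S) (x cstar : ℕ)
    (h1 : ∃ d, (cstar, d) ∈ S) (h2 : x < cstar)
    (h3 : ∀ p ∈ S, x < p.1 → cstar ≤ p.1) :
    sInf {d | (cstar, d) ∈ S} = sInf {d | ∃ c, (c, d) ∈ S ∧ x < c} := by
  obtain ⟨d0, hd0⟩ := h1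
  have hAne : {d | (cstar, d) ∈ S}.Nonempty := ⟨d0, hd0⟩
  have hsub : {d | (cstar, d) ∈ S} ⊆ {d | ∃ c, (c, d) ∈ S ∧ x < c} :=
    fun d hd => ⟨cstar, hd, h2⟩
  have hBne : {d | ∃ c, (c, d) ∈ S ∧ x < c}.Nonempty := hAne.mono hsub
  apply le_antisymm
  · -- sInf A ≤ sInf B
    obtain ⟨c, hc, hxc⟩ := Nat.sInf_mem hBne
    set dB := sInf {d | ∃ c, (c, d) ∈ S ∧ x < c} with hdB
    have hle : cstar ≤ c := h3 (c, dB) hc hxc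
    rcases lt_or_eq_of_le hle with hlt | heq
    · have : d0 ≤ dB := by
        by_contra hgt
        exact hcf ⟨cstar, d0, c, dB, hd0, hc, hlt, lt_of_not_ge hgt⟩
      exact le_trans (Nat.sInf_le hd0) this
    · exact Nat.sInf_le (by rw [← heq] at hc; exact hc)
  · exact le_csInf hAne fun d hd => Nat.sInf_le (hsub hd)
end

section
/- Let S be a finite crossing-free set of pairs of natural numbers and let x, y be natural numbers. Then S ∪ {(x,y)} is crossing-free if and only if both of the following hold: (i) either no element of S has first coordinate strictly less than x, or max {b | (a*,b) ∈ S} ≤ y, where a* is the largest first coordinate of an element of S strictly less than x; and (ii) either no element of S has first coordinate strictly greater than x, or y ≤ min {d | (c*,d) ∈ S}, where c* is the smallest first coordinate of an element of S strictly greater than x. -/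
/-- Soundness and completeness of Skeena's commit check (Algorithm 2):
`S ∪ {(x,y)}` is crossing-free iff
(i) either no element of `S` has first coordinate strictly less than `x`, or
`max {b | (astar,b) ∈ S} ≤ y` where `astar` is the largest first coordinate of
an element of `S` strictly less than `x`; and
(ii) either no element of `S` has first coordinate strictly greater than `x`,
or `y ≤ min {d | (cstar,d) ∈ S}` where `cstar` is the smallest first
coordinate of an element of `S` strictly greater than `x`. -/
theorem commit_check_iff (S : Set (ℕ × ℕ)) (hfin : S.Finite)
    (hcf : CrossingFree S) (x y : ℕ) :
    CrossingFree (S ∪ {(x, y)}) ↔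
      ((∀ p ∈ S, ¬ p.1 < x) ∨
        ∃ astar, (∃ b, (astar, b) ∈ S) ∧ astar < x ∧
          (∀ p ∈ S, p.1 < x → p.1 ≤ astar) ∧
          sSup {b | (astar, b) ∈ S} ≤ y) ∧
      ((∀ p ∈ S, ¬ x < p.1) ∨
        ∃ cstar, (∃ d, (cstar, d) ∈ S) ∧ x < cstar ∧
          (∀ p ∈ S, x < p.1 → cstar ≤ p.1) ∧
          y ≤ sInf {d | (cstar, d) ∈ S}) := by
  constructor
  · intro h
    constructor
    · by_cases h1 : ∀ p ∈ S, ¬ p.1 < x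
      · exact Or.inl h1
      · right
        push_neg at h1
        obtain ⟨p0, hp0, hp0x⟩ := h1
        have hfs : ({a | (∃ b, (a, b) ∈ S) ∧ a < x} : Set ℕ).Finite := by
          apply (hfin.image Prod.fst).subset
          rintro a ⟨⟨b, hb⟩, _⟩
          exact ⟨(a, b), hb, rfl⟩
        have hne : hfs.toFinset.Nonempty := by
          refine ⟨p0.1, ?_⟩
          simp only [Set.Finite.mem_toFinset, Set.mem_setOf_eq]
          exact ⟨⟨p0.2, by simpa using hp0⟩, hp0x⟩
        set astar := hfs.toFinset.max' hne with hadef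
        have hamem : (∃ b, (astar, b) ∈ S) ∧ astar < x := by
          have := hfs.toFinset.max'_mem hne
          rwa [Set.Finite.mem_toFinset] at this
        refine ⟨astar, hamem.1, hamem.2, ?_, ?_⟩
        · intro p hp hpx
          apply Finset.le_max'
          simp only [Set.Finite.mem_toFinset, Set.mem_setOf_eq]
          exact ⟨⟨p.2, by simpa using hp⟩, hpx⟩
        · apply csSup_le ⟨hamem.1.choose, hamem.1.choose_spec⟩
          intro b hb
          by_contra hby
          push_neg at hby
          exact h ⟨astar, b, x, y, Or.inl hb, Or.inr rfl, hamem.2, hby⟩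
    · by_cases h1 : ∀ p ∈ S, ¬ x < p.1
      · exact Or.inl h1
      · right
        push_neg at h1
        obtain ⟨p0, hp0, hp0x⟩ := h1
        have hfs : ({c | (∃ d, (c, d) ∈ S) ∧ x < c} : Set ℕ).Finite := by
          apply (hfin.image Prod.fst).subset
          rintro c ⟨⟨d, hd⟩, _⟩
          exact ⟨(c, d), hd, rfl⟩
        have hne : hfs.toFinset.Nonempty := by
          refine ⟨p0.1, ?_⟩
          simp only [Set.Finite.mem_toFinset, Set.mem_setOf_eq]
          exact ⟨⟨p0.2, by simpa using hp0⟩, hp0x⟩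
        set cstar := hfs.toFinset.min' hne with hcdef
        have hcmem : (∃ d, (cstar, d) ∈ S) ∧ x < cstar := by
          have := hfs.toFinset.min'_mem hne
          rwa [Set.Finite.mem_toFinset] at this
        refine ⟨cstar, hcmem.1, hcmem.2, ?_, ?_⟩
        · intro p hp hpx
          apply Finset.min'_le
          simp only [Set.Finite.mem_toFinset, Set.mem_setOf_eq]
          exact ⟨⟨p.2, by simpa using hp⟩, hpx⟩
        · apply le_csInf ⟨hcmem.1.choose, hcmem.1.choose_spec⟩
          intro d hd
          by_contra hdy
          push_neg at hdy
          exact h ⟨x, y, cstar, d, Or.inr rfl, Or.inl hd, hcmem.2, hdy⟩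
  · rintro ⟨hi, hii⟩ ⟨a, b, c, d, hab, hcd, hac, hdb⟩
    have hbdd : ∀ t : ℕ, BddAbove {b | (t, b) ∈ S} := by
      intro t
      apply Set.Finite.bddAbove
      apply (hfin.image Prod.snd).subset
      rintro b hb
      exact ⟨(t, b), hb, rfl⟩
    rcases hab with hab | hab <;> rcases hcd with hcd | hcd
    · exact hcf ⟨a, b, c, d, hab, hcd, hac, hdb⟩
    · -- (c,d) = (x,y): a < x, y < b
      simp only [Set.mem_singleton_iff, Prod.mk.injEq] at hcd
      obtain ⟨rfl, rfl⟩ := hcd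
      rcases hi with hi | ⟨astar, ⟨b0, hb0⟩, hax, hmax, hsup⟩
      · exact hi (a, b) hab hac
      · have hale : a ≤ astar := hmax (a, b) hab hac
        rcases eq_or_lt_of_le hale with heq | hlt
        · subst heq
          have : b ≤ sSup {b | (a, b) ∈ S} := le_csSup (hbdd a) hab
          exact absurd (this.trans hsup) (not_le.mpr hdb)
        · -- (a,b) ∈ S, (astar,b0) ∈ S, a < astar ⇒ b0 ≥ b
          have hb0b : ¬ b0 < b := fun hc => hcf ⟨a, b, astar, b0, hab, hb0, hlt, hc⟩
          push_neg at hb0b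
          have : b0 ≤ sSup {b | (astar, b) ∈ S} := le_csSup (hbdd astar) hb0
          exact absurd ((hb0b.trans this).trans hsup) (not_le.mpr hdb)
    · -- (a,b) = (x,y): x < c, d < y
      simp only [Set.mem_singleton_iff, Prod.mk.injEq] at hab
      obtain ⟨rfl, rfl⟩ := hab
      rcases hii with hii | ⟨cstar, ⟨d0, hd0⟩, hxc, hmin, hinf⟩
      · exact hii (c, d) hcd hac
      · have hcle : cstar ≤ c := hmin (c, d) hcd hac
        rcases eq_or_lt_of_le hcle with heq | hlt
        · subst heq
          have : sInf {d | (cstar, d) ∈ S} ≤ d := csInf_le (OrderBot.bddBelow _) hcd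
          exact absurd (hinf.trans this) (not_le.mpr hdb)
        · have hd0d : ¬ d < d0 := fun hc => hcf ⟨cstar, d0, c, d, hd0, hcd, hlt, hc⟩
          push_neg at hd0d
          have : sInf {d | (cstar, d) ∈ S} ≤ d0 := csInf_le (OrderBot.bddBelow _) hd0
          exact absurd ((hinf.trans this).trans hd0d) (not_le.mpr hdb)
    · simp only [Set.mem_singleton_iff, Prod.mk.injEq] at hab hcd
      omega
end

section
/- Let S be a finite crossing-free set of pairs of natural numbers and let x be a natural number such that S contains elements whose first coordinates are strictly below x and elements whose first coordinates are strictly above x. Let a* be the largest first coordinate strictly less than x and c* the smallest first coordinate strictly greater than x, and set L = max {b | (a*,b) ∈ S} and H = min {d | (c*,d) ∈ S}. Then L ≤ H, and the set of natural numbers y for which S ∪ {(x,y)} is crossing-free equals the closed interval [L, H]. -/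
/-- If `S` has entries strictly below and strictly above `x`, with `astar` the
largest first coordinate strictly below `x` and `cstar` the smallest first
coordinate strictly above `x`, and `L = max {b | (astar,b) ∈ S}`,
`H = min {d | (cstar,d) ∈ S}`, then `L ≤ H` and the set of `y` for which
`S ∪ {(x,y)}` is crossing-free is exactly the closed interval `[L, H]`. -/
theorem valid_snapshot_interval (S : Set (ℕ × ℕ)) (hfin : S.Finite)
    (hcf : CrossingFree S) (x astar cstar : ℕ)
    (ha1 : ∃ b, (astar, b) ∈ S) (ha2 : astar < x)
    (ha3 : ∀ p ∈ S, p.1 < x → p.1 ≤ astar)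
    (hc1 : ∃ d, (cstar, d) ∈ S) (hc2 : x < cstar)
    (hc3 : ∀ p ∈ S, x < p.1 → cstar ≤ p.1) :
    sSup {b | (astar, b) ∈ S} ≤ sInf {d | (cstar, d) ∈ S} ∧
      {y | CrossingFree (S ∪ {(x, y)})} =
        Set.Icc (sSup {b | (astar, b) ∈ S}) (sInf {d | (cstar, d) ∈ S}) := by
  set L := sSup {b | (astar, b) ∈ S} with hLdef
  set H := sInf {d | (cstar, d) ∈ S} with hHdef
  have hBfin : {b | (astar, b) ∈ S}.Finite := by
    apply (hfin.image Prod.snd).subset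
    intro b hb
    exact ⟨(astar, b), hb, rfl⟩
  have hL : (astar, L) ∈ S := Nat.sSup_mem ha1 hBfin.bddAbove
  have hH : (cstar, H) ∈ S := Nat.sInf_mem hc1
  have hLH : L ≤ H := by
    by_contra h
    exact hcf ⟨astar, L, cstar, H, hL, hH, ha2.trans hc2, lt_of_not_ge h⟩
  refine ⟨hLH, ?_⟩
  ext y
  simp only [Set.mem_setOf_eq, Set.mem_Icc]
  constructor
  · intro hy
    constructor
    · by_contra h
      exact hy ⟨astar, L, x, y, Or.inl hL, Or.inr rfl, ha2, lt_of_not_ge h⟩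
    · by_contra h
      exact hy ⟨x, y, cstar, H, Or.inr rfl, Or.inl hH, hc2, lt_of_not_ge h⟩
  · rintro ⟨hyL, hyH⟩ ⟨a, b, c, d, hab, hcd, hac, hdb⟩
    rcases hab with hab | hab <;> rcases hcd with hcd | hcd
    · exact hcf ⟨a, b, c, d, hab, hcd, hac, hdb⟩
    · -- (c,d) = (x,y), (a,b) ∈ S
      have hc : c = x := (Prod.mk.injEq _ _ _ _).mp hcd |>.1
      have hd : d = y := (Prod.mk.injEq _ _ _ _).mp hcd |>.2
      subst hc hd
      have haa : a ≤ astar := ha3 (a, b) hab hac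
      have hbL : L < b := lt_of_le_of_lt hyL hdb
      rcases lt_or_eq_of_le haa with h | h
      · exact hcf ⟨a, b, astar, L, hab, hL, h, hbL⟩
      · subst h
        exact absurd (le_csSup hBfin.bddAbove hab) (not_le.mpr hbL)
    · -- (a,b) = (x,y), (c,d) ∈ S
      have ha : a = x := (Prod.mk.injEq _ _ _ _).mp hab |>.1
      have hb : b = y := (Prod.mk.injEq _ _ _ _).mp hab |>.2
      subst ha hb
      have hcc : cstar ≤ c := hc3 (c, d) hcd hac
      have hdH : d < H := lt_of_lt_of_le hdb hyH
      rcases lt_or_eq_of_le hcc with h | h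
      · exact hcf ⟨cstar, H, c, d, hH, hcd, h, hdH⟩
      · subst h
        exact absurd (Nat.sInf_le hcd) (not_le.mpr hdH)
    · have : a = x := (Prod.mk.injEq _ _ _ _).mp hab |>.1
      have : c = x := (Prod.mk.injEq _ _ _ _).mp hcd |>.1
      omega
end

section
/- Let (x₁,y₁), ..., (xₙ,yₙ) be a finite sequence of pairs of natural numbers, and define S₀ = ∅ and Sᵢ = Sᵢ₋₁ ∪ {(xᵢ,yᵢ)} for 1 ≤ i ≤ n. Suppose that for every i, the pair (xᵢ,yᵢ) passes the nearest-neighbor check against Sᵢ₋₁: (i) either no element of Sᵢ₋₁ has first coordinate strictly less than xᵢ, or max {b | (a*,b) ∈ Sᵢ₋₁} ≤ yᵢ, where a* is the largest first coordinate of an element of Sᵢ₋₁ strictly less than xᵢ; and (ii) either no element of Sᵢ₋₁ has first coordinate strictly greater than xᵢ, or yᵢ ≤ min {d | (c*,d) ∈ Sᵢ₋₁}, where c* is the smallest first coordinate of an element of Sᵢ₋₁ strictly greater than xᵢ. Then every Sᵢ, and in particular Sₙ, is crossing-free. -/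
/-- The pair `(x, y)` passes the nearest-neighbor commit check against `S`:
(i) either no element of `S` has first coordinate strictly less than `x`, or
`max {b | (astar,b) ∈ S} ≤ y` where `astar` is the largest first coordinate of
an element of `S` strictly less than `x`; and
(ii) either no element of `S` has first coordinate strictly greater than `x`,
or `y ≤ min {d | (cstar,d) ∈ S}` where `cstar` is the smallest first
coordinate of an element of `S` strictly greater than `x`. -/
def NearestNeighborCheck (S : Set (ℕ × ℕ)) (x y : ℕ) : Prop :=
  ((∀ p ∈ S, ¬ p.1 < x) ∨
    ∃ astar, (∃ b, (astar, b) ∈ S) ∧ astar < x ∧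
      (∀ p ∈ S, p.1 < x → p.1 ≤ astar) ∧
      sSup {b | (astar, b) ∈ S} ≤ y) ∧
  ((∀ p ∈ S, ¬ x < p.1) ∨
    ∃ cstar, (∃ d, (cstar, d) ∈ S) ∧ x < cstar ∧
      (∀ p ∈ S, x < p.1 → cstar ≤ p.1) ∧
      y ≤ sInf {d | (cstar, d) ∈ S})

lemma step_cf (S : Set (ℕ × ℕ)) (hfin : S.Finite) (hcf : CrossingFree S)
    (x y : ℕ) (hch : NearestNeighborCheck S x y) :
    CrossingFree (insert (x, y) S) := by
  rintro ⟨a, b, c, d, ha, hc, hac, hdb⟩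
  rcases ha with ha | ha <;> rcases hc with hc | hc
  · exact absurd (Prod.ext_iff.mp (ha.trans hc.symm)).1 hac.ne
  · -- (a,b) = (x,y), (c,d) ∈ S
    obtain ⟨hax, hby⟩ := Prod.ext_iff.mp ha
    subst hax; subst hby
    rcases hch.2 with h | ⟨cstar, ⟨d0, hd0⟩, hxc, hmin, hinf⟩
    · exact h (c, d) hc hac
    · have hcs : cstar ≤ c := hmin (c, d) hc hac
      rcases eq_or_lt_of_le hcs with rfl | hlt
      · have := hinf.trans (Nat.sInf_le hc); omega
      · have h2 : ¬ d < d0 := fun h => hcf ⟨cstar, d0, c, d, hd0, hc, hlt, h⟩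
        have := hinf.trans (Nat.sInf_le hd0); omega
  · -- (a,b) ∈ S, (c,d) = (x,y)
    obtain ⟨hcx, hdy⟩ := Prod.ext_iff.mp hc
    subst hcx; subst hdy
    rcases hch.1 with h | ⟨astar, ⟨b0, hb0⟩, hax, hmax, hsup⟩
    · exact h (a, b) ha hac
    · have hbdd : BddAbove {b | (astar, b) ∈ S} := by
        apply Set.Finite.bddAbove
        exact hfin.preimage_embedding ⟨fun b => (astar, b), fun u v h => (Prod.ext_iff.mp h).2⟩
      have has : a ≤ astar := hmax (a, b) ha hac
      rcases eq_or_lt_of_le has with rfl | hlt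
      · have := (le_csSup hbdd ha).trans hsup; omega
      · have h2 : b ≤ b0 := by
          by_contra h
          exact hcf ⟨a, b, astar, b0, ha, hb0, hlt, not_le.mp h⟩
        have h3 := (le_csSup hbdd hb0).trans hsup
        omega
  · exact hcf ⟨a, b, c, d, ha, hc, hac, hdb⟩

/-- A registry built from the empty set by a sequence of insertions, each of
which passes the nearest-neighbor commit check against the registry built so
far, is crossing-free at every stage. Here `Sᵢ = {f j | j < i}`. -/
theorem registry_invariant (n : ℕ) (f : Fin n → ℕ × ℕ)
    (hcheck : ∀ i : Fin n,
      NearestNeighborCheck (f '' {j | (j : ℕ) < (i : ℕ)}) (f i).1 (f i).2) :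
    ∀ i ≤ n, CrossingFree (f '' {j | (j : ℕ) < i}) := by
  intro i
  induction i with
  | zero =>
      intro _
      rintro ⟨a, b, c, d, ⟨j, hj, _⟩, _⟩
      exact absurd hj (Nat.not_lt_zero _)
  | succ i ih =>
      intro hin
      have hi : i < n := hin
      have hset : (f '' {j | (j : ℕ) < i + 1}) =
          insert (f ⟨i, hi⟩) (f '' {j | (j : ℕ) < i}) := by
        ext p
        constructor
        · rintro ⟨j, hj, rfl⟩
          rcases Nat.lt_succ_iff_lt_or_eq.mp hj with h | h
          · exact Or.inr ⟨j, h, rfl⟩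
          · left
            congr 1
            exact Fin.ext h
        · rintro (rfl | ⟨j, hj, rfl⟩)
          · exact ⟨⟨i, hi⟩, Nat.lt_succ_self i, rfl⟩
          · exact ⟨j, Nat.lt_succ_of_lt hj, rfl⟩
      rw [hset]
      have hfin : (f '' {j | (j : ℕ) < i}).Finite :=
        (Set.finite_range f).subset (Set.image_subset_range _ _)
      have := hcheck ⟨i, hi⟩
      exact step_cf _ hfin (ih hi.le) _ _ this
end

section
/- Let S be a finite crossing-free set of pairs of natural numbers. Then there exists a list enumerating the elements of S without repetition such that the list of first coordinates is sorted in nondecreasing order and the list of second coordinates is also sorted in nondecreasing order. -/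
theorem Set.Finite.exists_nodup_pairwise_le_of_isChain {α : Type*} [PartialOrder α]
    {s : Set α} (hfin : s.Finite) (hchain : IsChain (· ≤ ·) s) :
    ∃ l : List α, l.Nodup ∧ (∀ a, a ∈ l ↔ a ∈ s) ∧ l.Pairwise (· ≤ ·) := by
  classical
  have := hfin.fintype
  have : Std.Total (α := s) (· ≤ ·) := ⟨fun a b => hchain.total a.2 b.2⟩
  set l := (Finset.univ : Finset s).sort (· ≤ ·)
  refine ⟨l.map Subtype.val, (Finset.sort_nodup _ _).map Subtype.val_injective, ?_,
    List.pairwise_map.2 (Finset.pairwise_sort _ _)⟩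
  intro a
  simp [l]

theorem CrossingFree.isChain {S : Set (ℕ × ℕ)} (hcf : CrossingFree S) :
    IsChain (· ≤ ·) S := by
  rintro ⟨a, b⟩ hab ⟨c, d⟩ hcd -
  simp only [CrossingFree, not_exists, not_and, not_lt] at hcf
  have := hcf a b c d hab hcd
  have := hcf c d a b hcd hab
  simp only [Prod.mk_le_mk]
  omega

/-- A finite crossing-free set can be enumerated without repetition so that
both the list of first coordinates and the list of second coordinates are
sorted in nondecreasing order. -/
theorem exists_simultaneously_sorted_enumeration (S : Set (ℕ × ℕ))
    (hfin : S.Finite) (hcf : CrossingFree S) :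
    ∃ l : List (ℕ × ℕ), l.Nodup ∧ (∀ p, p ∈ l ↔ p ∈ S) ∧
      (l.map Prod.fst).Pairwise (· ≤ ·) ∧ (l.map Prod.snd).Pairwise (· ≤ ·) := by
  obtain ⟨l, hnodup, hmem, hsorted⟩ := hfin.exists_nodup_pairwise_le_of_isChain hcf.isChain
  exact ⟨l, hnodup, hmem, List.pairwise_map.2 (hsorted.imp And.left),
    List.pairwise_map.2 (hsorted.imp And.right)⟩
end

section
/- Let α be a type, let r₁, r₂ : α → α → Prop be relations, and let f₁, f₂ : α → ℕ be functions. Suppose: (i) for all u, v, f₁ u < f₁ v implies f₂ u < f₂ v (sub-transactions commit in the same order in both engines); (ii) for all u, v, r₁ u v implies f₁ u < f₁ v; and (iii) for all u, v, r₂ u v implies f₂ u < f₂ v. Then the transitive closure of the union relation r₁ ⊔ r₂ is irreflexive; in particular, the combined dependency graph has no cycle. -/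
/-- Cross-engine serializability: if each engine uses commit ordering
(`rᵢ u v → fᵢ u < fᵢ v`) and sub-transactions commit in the same order in
both engines (`f₁ u < f₁ v → f₂ u < f₂ v`), then the transitive closure of
the union dependency relation `r₁ ⊔ r₂` is irreflexive, i.e., the combined
dependency graph has no cycle. -/
theorem cross_engine_serializable {α : Type*} (r₁ r₂ : α → α → Prop)
    (f₁ f₂ : α → ℕ)
    (horder : ∀ u v, f₁ u < f₁ v → f₂ u < f₂ v)
    (h₁ : ∀ u v, r₁ u v → f₁ u < f₁ v)
    (h₂ : ∀ u v, r₂ u v → f₂ u < f₂ v) :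
    Irreflexive (Relation.TransGen (r₁ ⊔ r₂)) := by
  have key : ∀ u v, Relation.TransGen (r₁ ⊔ r₂) u v → f₂ u < f₂ v := by
    intro u v h
    induction h with
    | single h =>
      rcases h with h | h
      · exact horder _ _ (h₁ _ _ h)
      · exact h₂ _ _ h
    | tail _ h ih =>
      rcases h with h | h
      · exact ih.trans (horder _ _ (h₁ _ _ h))
      · exact ih.trans (h₂ _ _ h)
  intro a h
  exact lt_irrefl _ (key a a h)
end
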